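/- Let p ∈ (2,4), a > 0, b > 0, μ > 0, σ > 0, and define g : (0,∞) → ℝ by g(t) = (a/2)σt² + (b/4)σ²t⁴ − (μ/p)σt^p. If t > 0 satisfies g'(t) = 0 and g''(t) < 0, then g(t) < ((p−2)a/(2p))·(8a/((p+2)(4−p)μ))^(2/(p−2))·σ. -/

import Mathlib

open Real

/-!
At a critical point `t` of `g`, `μ t^(p-2) = a + bσt²`; this eliminates `b` and gives
`g t = σ X^q (a p - (4 - p) μ X) / (4 p)` with `X = t^(p-2)` and `q = 2 / (p - 2)`, since `t² = X^q`.
By weighted AM–GM the right-hand side, as a function of `X > 0`, is maximal at `X = 2a / ((4 - p) μ)`,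
so `g t ≤ (p-2)a/(4p) · (2a / ((4 - p) μ))^q · σ`. The stated threshold is larger by the factor
`2 (4 / (p + 2))^q`, which exceeds `1` because `((p + 2) / 4)^q ≤ exp (1/2) < 2`.
-/

theorem rpow_mul_add_one_sub_mul_le_one {q y : ℝ} (hq : 0 < q) (hy : 0 < y) :
    y ^ q * (q + 1 - q * y) ≤ 1 := by
  have hlog : q * log y ≤ q * (y - 1) := mul_le_mul_of_nonneg_left (log_le_sub_one_of_pos hy) hq.le
  have hlin : q + 1 - q * y ≤ exp (-(q * log y)) := by
    linarith [add_one_le_exp (-(q * log y))]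
  calc y ^ q * (q + 1 - q * y) ≤ y ^ q * exp (-(q * log y)) :=
        mul_le_mul_of_nonneg_left hlin (rpow_nonneg hy.le q)
    _ = 1 := by rw [rpow_def_of_pos hy, ← exp_add, mul_comm, add_neg_cancel, exp_zero]

theorem rpow_mul_add_one_mul_sub_mul_le {q m x : ℝ} (hq : 0 < q) (hm : 0 < m) (hx : 0 < x) :
    x ^ q * ((q + 1) * m - q * x) ≤ m ^ (q + 1) := by
  have hy := rpow_mul_add_one_sub_mul_le_one hq (div_pos hx hm)
  have hxq : x ^ q = m ^ q * (x / m) ^ q := by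
    rw [← mul_rpow hm.le (div_pos hx hm).le, mul_div_cancel₀ x hm.ne']
  calc x ^ q * ((q + 1) * m - q * x)
      = m ^ (q + 1) * ((x / m) ^ q * (q + 1 - q * (x / m))) := by
        rw [hxq, rpow_add_one hm.ne']; field_simp
    _ ≤ m ^ (q + 1) := mul_le_of_le_one_right (rpow_nonneg hm.le _) hy

theorem add_two_div_four_rpow_lt_two {p : ℝ} (hp : 2 < p) :
    ((p + 2) / 4) ^ (2 / (p - 2)) < 2 := by
  have hbase : (p + 2) / 4 ≤ exp ((p - 2) / 4) := by
    linarith [add_one_le_exp ((p - 2) / 4)]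
  calc ((p + 2) / 4) ^ (2 / (p - 2)) ≤ exp ((p - 2) / 4) ^ (2 / (p - 2)) :=
        rpow_le_rpow (by linarith) hbase (div_pos two_pos (by linarith)).le
    _ = exp (1 / 2) := by
        have : p - 2 ≠ 0 := by linarith
        rw [← exp_mul]; congr 1; field_simp; ring
    _ < 2 := by
        have h : exp (1 / 2) ^ 2 < 2 ^ 2 := by
          rw [← exp_nat_mul]; norm_num; linarith [exp_one_lt_d9]
        exact lt_of_pow_lt_pow_left₀ 2 (by norm_num) h

noncomputable def bubbleEnergy (a b μ σ p : ℝ) : ℝ → ℝ :=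
  fun s => a / 2 * σ * s ^ 2 + b / 4 * σ ^ 2 * s ^ 4 - μ / p * σ * s ^ p

section BubbleEnergy

variable {a b μ σ p t : ℝ}

theorem hasDerivAt_bubbleEnergy (hp : p ≠ 0) (ht : 0 < t) :
    HasDerivAt (bubbleEnergy a b μ σ p)
      (a * σ * t + b * σ ^ 2 * t ^ 3 - μ * σ * t ^ (p - 1)) t := by
  have h2 := (hasDerivAt_pow 2 t).const_mul (a / 2 * σ)
  have h4 := (hasDerivAt_pow 4 t).const_mul (b / 4 * σ ^ 2)
  have hp' := (hasDerivAt_rpow_const (p := p) (Or.inl ht.ne')).const_mul (μ / p * σ)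
  refine ((h2.add h4).sub hp').congr_deriv ?_
  field_simp
  ring

theorem mul_rpow_sub_two_eq_of_deriv_bubbleEnergy_eq_zero (hp : p ≠ 0) (hσ : σ ≠ 0) (ht : 0 < t)
    (hcrit : deriv (bubbleEnergy a b μ σ p) t = 0) :
    μ * t ^ (p - 2) = a + b * σ * t ^ 2 := by
  rw [(hasDerivAt_bubbleEnergy hp ht).deriv, show p - 1 = p - 2 + 1 by ring,
    rpow_add_one ht.ne'] at hcrit
  have : σ * t * (a + b * σ * t ^ 2 - μ * t ^ (p - 2)) = 0 := by linear_combination hcrit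
  linarith [(mul_eq_zero.mp this).resolve_left (mul_ne_zero hσ ht.ne')]

theorem bubbleEnergy_eq_of_mul_rpow_sub_two_eq (hp : p ≠ 0) (ht : 0 < t)
    (hcrit : μ * t ^ (p - 2) = a + b * σ * t ^ 2) :
    bubbleEnergy a b μ σ p t = σ * t ^ 2 * (a * p - (4 - p) * μ * t ^ (p - 2)) / (4 * p) := by
  have htp : t ^ p = t ^ 2 * t ^ (p - 2) := by
    rw [← rpow_natCast, ← rpow_add ht]; norm_num
  simp only [bubbleEnergy, htp]
  field_simp
  linear_combination (-2 * σ * p) * hcrit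

theorem bubbleEnergy_le_of_mul_rpow_sub_two_eq (hp2 : 2 < p) (hp4 : p < 4) (ha : 0 < a)
    (hμ : 0 < μ) (hσ : 0 ≤ σ) (ht : 0 < t) (hcrit : μ * t ^ (p - 2) = a + b * σ * t ^ 2) :
    bubbleEnergy a b μ σ p t ≤ (p - 2) * a / (4 * p) * (2 * a / ((4 - p) * μ)) ^ (2 / (p - 2)) * σ := by
  set q := 2 / (p - 2)
  set m := 2 * a / ((4 - p) * μ)
  set X := t ^ (p - 2)
  have hq : 0 < q := div_pos two_pos (by linarith)
  have hm : 0 < m := div_pos (by linarith) (mul_pos (by linarith) hμ)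
  have hX : 0 < X := rpow_pos_of_pos ht _
  have ht2 : t ^ 2 = X ^ q := by
    rw [← rpow_mul ht.le, mul_div_cancel₀ _ (by linarith : p - 2 ≠ 0)]; norm_num
  have hmax : X ^ q * (a * p - (4 - p) * μ * X) ≤ (p - 2) * a * m ^ q := by
    set c := (p - 2) * (4 - p) * μ / 2
    have hc : 0 ≤ c := by have := mul_pos (sub_pos.2 hp2) (sub_pos.2 hp4); positivity
    have hp2' : p - 2 ≠ 0 := by linarith
    have hp4' : 4 - p ≠ 0 := by linarith
    calc X ^ q * (a * p - (4 - p) * μ * X) = c * (X ^ q * ((q + 1) * m - q * X)) := by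
          simp only [c, q, m]; field_simp; ring
      _ ≤ c * m ^ (q + 1) := mul_le_mul_of_nonneg_left (rpow_mul_add_one_mul_sub_mul_le hq hm hX) hc
      _ = (p - 2) * a * m ^ q := by
          rw [rpow_add_one hm.ne']; simp only [c, m]; field_simp
  rw [bubbleEnergy_eq_of_mul_rpow_sub_two_eq (by linarith) ht hcrit, ht2, mul_assoc σ]
  calc σ * (X ^ q * (a * p - (4 - p) * μ * X)) / (4 * p) ≤ σ * ((p - 2) * a * m ^ q) / (4 * p) := by
        gcongr
    _ = (p - 2) * a / (4 * p) * m ^ q * σ := by ring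

end BubbleEnergy

theorem stmt_8_general (p a b μ σ t : ℝ) (hp2 : 2 < p) (hp4 : p < 4)
    (ha : 0 < a) (hμ : 0 < μ) (hσ : 0 < σ) (ht : 0 < t)
    (h1 : deriv (fun s : ℝ => a / 2 * σ * s ^ 2 + b / 4 * σ ^ 2 * s ^ 4 - μ / p * σ * s ^ p) t = 0) :
    a / 2 * σ * t ^ 2 + b / 4 * σ ^ 2 * t ^ 4 - μ / p * σ * t ^ p
      < (p - 2) * a / (2 * p) * (8 * a / ((p + 2) * (4 - p) * μ)) ^ (2 / (p - 2)) * σ := by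
  set q := 2 / (p - 2)
  set T := 8 * a / ((p + 2) * (4 - p) * μ)
  have hT : 0 < T := div_pos (by linarith) (by have := mul_pos (sub_pos.2 hp4) hμ; positivity)
  have hcrit := mul_rpow_sub_two_eq_of_deriv_bubbleEnergy_eq_zero (by linarith) hσ.ne' ht h1
  have hm : 2 * a / ((4 - p) * μ) = (p + 2) / 4 * T := by
    have : 4 - p ≠ 0 := by linarith
    have : p + 2 ≠ 0 := by linarith
    simp only [T]; field_simp; ring
  calc bubbleEnergy a b μ σ p t
      ≤ (p - 2) * a / (4 * p) * (2 * a / ((4 - p) * μ)) ^ q * σ :=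
        bubbleEnergy_le_of_mul_rpow_sub_two_eq hp2 hp4 ha hμ hσ.le ht hcrit
    _ = (p - 2) * a / (4 * p) * ((p + 2) / 4) ^ q * T ^ q * σ := by
        rw [hm, mul_rpow (by linarith) hT.le]; ring
    _ < (p - 2) * a / (4 * p) * 2 * T ^ q * σ := by
        have : 0 < (p - 2) * a / (4 * p) := div_pos (mul_pos (by linarith) ha) (by linarith)
        gcongr
        exact add_two_div_four_rpow_lt_two hp2
    _ = (p - 2) * a / (2 * p) * T ^ q * σ := by ring

/-- For `p ∈ (2,4)`, `a, b, μ, σ > 0` and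
`g t = (a/2)σt² + (b/4)σ²t⁴ − (μ/p)σt^p`, if `t > 0` satisfies `g'(t) = 0` and
`g''(t) < 0`, then `g t < ((p−2)a/(2p))·(8a/((p+2)(4−p)μ))^(2/(p−2))·σ`. -/
theorem stmt_8 (p a b μ σ t : ℝ) (hp2 : 2 < p) (hp4 : p < 4)
    (ha : 0 < a) (hb : 0 < b) (hμ : 0 < μ) (hσ : 0 < σ) (ht : 0 < t)
    (h1 : deriv (fun s : ℝ => a / 2 * σ * s ^ 2 + b / 4 * σ ^ 2 * s ^ 4 - μ / p * σ * s ^ p) t = 0)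
    (h2 : deriv (deriv (fun s : ℝ => a / 2 * σ * s ^ 2 + b / 4 * σ ^ 2 * s ^ 4 - μ / p * σ * s ^ p)) t < 0) :
    a / 2 * σ * t ^ 2 + b / 4 * σ ^ 2 * t ^ 4 - μ / p * σ * t ^ p
      < (p - 2) * a / (2 * p) * (8 * a / ((p + 2) * (4 - p) * μ)) ^ (2 / (p - 2)) * σ :=
  stmt_8_general p a b μ σ t hp2 hp4 ha hμ hσ ht h1
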